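/- If D ≤ 0, then there exists a unique t₃ > 0 with ψ(t₃) = q·D; moreover t₃ < t_max (the unique maximizer of ψ), ψ'(t₃) > 0, and the fiber map φ attains its global infimum over (0,∞) at t₃, i.e. φ(t₃) = inf_{t>0} φ(t). -/

import Mathlib

/-!
Writing `ψ' t = t ^ (-(q + α)) * h t` with
`h t = C (q + α - 1) - A (q - p) t ^ (p + α - 1) - B (q - p θ) t ^ (p θ + α - 1)` strictly
decreasing, `ψ` increases on `(0, tmax]` and decreases on `[tmax, ∞)`. It tends to `-∞` at `0⁺`
and to `0` at `∞`, so `ψ > 0 ≥ q D` on `[tmax, ∞)` and the level `q D` is crossed exactly once,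
at some `t₃ < tmax`. Since `φ' t = t ^ (q - 1) * (ψ t - q D)`, `φ` decreases before `t₃` and
increases after it.
-/

open Set Filter Topology Real

section Unimodal

variable {f : ℝ → ℝ}

theorem lt_of_strictAntiOn_Ici_of_tendsto {a l x : ℝ} (hf : StrictAntiOn f (Ici a))
    (hl : Tendsto f atTop (𝓝 l)) (hx : a ≤ x) : l < f x := by
  have hle : l ≤ f (x + 1) := by
    refine le_of_tendsto hl ?_
    filter_upwards [eventually_ge_atTop (x + 1)] with s hs
    exact hf.antitoneOn (mem_Ici.2 (by linarith)) (mem_Ici.2 (by linarith)) hs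
  exact hle.trans_lt (hf (mem_Ici.2 hx) (mem_Ici.2 (by linarith)) (by linarith))

theorem isMinOn_Ioi_of_deriv_neg_of_deriv_pos {a c : ℝ} (hc : a < c)
    (hcont : ContinuousOn f (Ioi a)) (hneg : ∀ t ∈ Ioo a c, deriv f t < 0)
    (hpos : ∀ t ∈ Ioi c, 0 < deriv f t) : IsMinOn f (Ioi a) c := by
  have hanti : StrictAntiOn f (Ioc a c) :=
    strictAntiOn_of_deriv_neg (convex_Ioc a c) (hcont.mono Ioc_subset_Ioi_self)
      (by rwa [interior_Ioc])
  have hmono : StrictMonoOn f (Ici c) :=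
    strictMonoOn_of_deriv_pos (convex_Ici c) (hcont.mono (Ici_subset_Ioi.2 hc))
      (by rwa [interior_Ici])
  intro t ht
  rcases le_total t c with htc | hct
  · exact hanti.antitoneOn ⟨ht, htc⟩ ⟨hc, le_rfl⟩ htc
  · exact hmono.monotoneOn (mem_Ici.2 le_rfl) hct hct

theorem exists_crossing_of_deriv_pos_of_deriv_neg {a m l y : ℝ} (ham : a < m)
    (hcont : ContinuousOn f (Ioi a)) (hpos : ∀ t ∈ Ioo a m, 0 < deriv f t)
    (hneg : ∀ t ∈ Ioi m, deriv f t < 0) (hbot : Tendsto f (𝓝[>] a) atBot)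
    (htop : Tendsto f atTop (𝓝 l)) (hy : y ≤ l) :
    ∃ t ∈ Ioo a m, f t = y ∧ (∀ s ∈ Ioo a t, f s < y) ∧ ∀ s ∈ Ioi t, y < f s := by
  have hmono : StrictMonoOn f (Ioc a m) :=
    strictMonoOn_of_deriv_pos (convex_Ioc a m) (hcont.mono Ioc_subset_Ioi_self)
      (by rwa [interior_Ioc])
  have hanti : StrictAntiOn f (Ici m) :=
    strictAntiOn_of_deriv_neg (convex_Ici m) (hcont.mono (Ici_subset_Ioi.2 ham))
      (by rwa [interior_Ici])
  have htail : ∀ s, m ≤ s → y < f s := fun s hs =>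
    hy.trans_lt (lt_of_strictAntiOn_Ici_of_tendsto hanti htop hs)
  obtain ⟨t₀, hft₀, ht₀a, ht₀m⟩ : ∃ t₀, f t₀ < y ∧ a < t₀ ∧ t₀ < m :=
    ((hbot.eventually (eventually_lt_atBot y)).and
      ((eventually_mem_nhdsWithin).and (eventually_nhdsWithin_of_eventually_nhds
        (eventually_lt_nhds ham)))).exists
  obtain ⟨t, ⟨ht₀t, htm⟩, hft⟩ : y ∈ f '' Icc t₀ m :=
    intermediate_value_Icc ht₀m.le (hcont.mono fun s hs => ht₀a.trans_le hs.1)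
      ⟨hft₀.le, (htail m le_rfl).le⟩
  have hat : a < t := ht₀a.trans_le ht₀t
  have htm : t < m := htm.lt_of_ne (by rintro rfl; exact (htail t le_rfl).ne' hft)
  refine ⟨t, ⟨hat, htm⟩, hft, fun s hs => ?_, fun s hs => ?_⟩
  · exact hft ▸ hmono ⟨hs.1, (hs.2.trans htm).le⟩ ⟨hat, htm.le⟩ hs.2
  · rcases le_or_gt s m with hsm | hms
    · exact hft ▸ hmono ⟨hat, htm.le⟩ ⟨hat.trans hs, hsm⟩ hs
    · exact htail s hms.le

end Unimodal

noncomputable section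

namespace NehariFibering

variable (A B C p q θ α : ℝ)

def psi (t : ℝ) : ℝ :=
  A * t ^ (p - q) + B * t ^ (p * θ - q) - C * t ^ (1 - α - q)

def psiNumerator (t : ℝ) : ℝ :=
  C * (q + α - 1) - A * (q - p) * t ^ (p + α - 1) - B * (q - p * θ) * t ^ (p * θ + α - 1)

def fiberMap (D t : ℝ) : ℝ :=
  t ^ p / p * A + t ^ (p * θ) / (p * θ) * B - t ^ (1 - α) / (1 - α) * C - t ^ q * D

variable {A B C p q θ α}

theorem hasDerivAt_psi {t : ℝ} (ht : 0 < t) :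
    HasDerivAt (psi A B C p q θ α) (psiNumerator A B C p q θ α t * t ^ (-(q + α))) t := by
  have hpow : ∀ r : ℝ, HasDerivAt (fun t => t ^ r) (r * t ^ (r - 1)) t := fun r =>
    hasDerivAt_rpow_const (Or.inl ht.ne')
  have hd := (((hpow (p - q)).const_mul A).add ((hpow (p * θ - q)).const_mul B)).sub
    ((hpow (1 - α - q)).const_mul C)
  rw [show p - q - 1 = (p + α - 1) + -(q + α) by ring,
    show p * θ - q - 1 = (p * θ + α - 1) + -(q + α) by ring,
    show 1 - α - q - 1 = 0 + -(q + α) by ring, rpow_add ht, rpow_add ht, rpow_add ht,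
    rpow_zero] at hd
  exact hd.congr_deriv (by simp only [psiNumerator]; ring)

theorem continuousOn_psi : ContinuousOn (psi A B C p q θ α) (Ioi 0) :=
  continuousOn_of_forall_continuousAt fun _ ht => (hasDerivAt_psi ht).continuousAt

theorem strictAntiOn_psiNumerator (hA : 0 < A) (hB : 0 < B) (hpq : p < q) (hpθq : p * θ < q)
    (hpα : 1 < p + α) (hpθα : 1 < p * θ + α) :
    StrictAntiOn (psiNumerator A B C p q θ α) (Ioi 0) := by
  intro x hx y _ hxy
  have h₁ := mul_lt_mul_of_pos_left
    (rpow_lt_rpow (le_of_lt hx) hxy (by linarith : 0 < p + α - 1)) (mul_pos hA (sub_pos.2 hpq))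
  have h₂ := mul_lt_mul_of_pos_left
    (rpow_lt_rpow (le_of_lt hx) hxy (by linarith : 0 < p * θ + α - 1))
    (mul_pos hB (sub_pos.2 hpθq))
  simp only [psiNumerator]
  linarith

theorem deriv_psi_pos_and_neg_of_isMaxOn (hA : 0 < A) (hB : 0 < B) (hpq : p < q)
    (hpθq : p * θ < q) (hpα : 1 < p + α) (hpθα : 1 < p * θ + α) {tmax : ℝ} (htmax : 0 < tmax)
    (hmax : IsMaxOn (psi A B C p q θ α) (Ioi 0) tmax) :
    (∀ t ∈ Ioo 0 tmax, 0 < deriv (psi A B C p q θ α) t) ∧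
      ∀ t ∈ Ioi tmax, deriv (psi A B C p q θ α) t < 0 := by
  have hnum := strictAntiOn_psiNumerator (C := C) hA hB hpq hpθq hpα hpθα
  have hzero : psiNumerator A B C p q θ α tmax = 0 := by
    have h := (hmax.isLocalMax (Ioi_mem_nhds htmax)).deriv_eq_zero
    rw [(hasDerivAt_psi htmax).deriv] at h
    exact (mul_eq_zero.1 h).resolve_right (rpow_pos_of_pos htmax _).ne'
  refine ⟨fun t ht => ?_, fun t ht => ?_⟩
  · rw [(hasDerivAt_psi ht.1).deriv]
    exact mul_pos (hzero ▸ hnum ht.1 htmax ht.2) (rpow_pos_of_pos ht.1 _)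
  · have ht0 : 0 < t := htmax.trans ht
    rw [(hasDerivAt_psi ht0).deriv]
    exact mul_neg_of_neg_of_pos (hzero ▸ hnum htmax ht0 ht) (rpow_pos_of_pos ht0 _)

theorem tendsto_psi_atTop (hpq : p < q) (hpθq : p * θ < q) (hqα : 1 < q + α) :
    Tendsto (psi A B C p q θ α) atTop (𝓝 0) := by
  have h : ∀ r : ℝ, r < 0 → Tendsto (fun t : ℝ => t ^ r) atTop (𝓝 0) := fun r hr => by
    simpa using tendsto_rpow_neg_atTop (neg_pos.2 hr)
  have hlim := (((h (p - q) (by linarith)).const_mul A).add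
    ((h (p * θ - q) (by linarith)).const_mul B)).sub ((h (1 - α - q) (by linarith)).const_mul C)
  rw [mul_zero, mul_zero, mul_zero, add_zero, sub_zero] at hlim
  exact hlim

theorem tendsto_psi_nhdsGT_zero (hC : 0 < C) (hpα : 1 < p + α) (hpθα : 1 < p * θ + α)
    (hqα : 1 < q + α) : Tendsto (psi A B C p q θ α) (𝓝[>] 0) atBot := by
  have h : ∀ r : ℝ, 0 < r → Tendsto (fun t : ℝ => t ^ r) (𝓝[>] 0) (𝓝 0) := fun r hr => by
    simpa [zero_rpow hr.ne'] using
      (continuousAt_rpow_const 0 r (Or.inr hr.le)).tendsto.mono_left nhdsWithin_le_nhds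
  have hfactor : Tendsto (fun t : ℝ => A * t ^ (p + α - 1) + B * t ^ (p * θ + α - 1) - C)
      (𝓝[>] 0) (𝓝 (-C)) := by
    simpa using
      (((h _ (by linarith)).const_mul A).add ((h _ (by linarith)).const_mul B)).sub_const C
  refine ((tendsto_rpow_neg_nhdsGT_zero (by linarith : 1 - α - q < 0)).atTop_mul_neg
    (neg_neg_of_pos hC) hfactor).congr' ?_
  filter_upwards [self_mem_nhdsWithin] with t ht
  rw [psi, show p - q = (1 - α - q) + (p + α - 1) by ring,
    show p * θ - q = (1 - α - q) + (p * θ + α - 1) by ring, rpow_add ht, rpow_add ht]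
  ring

theorem hasDerivAt_fiberMap (hp : p ≠ 0) (hpθ : p * θ ≠ 0) (hα : α ≠ 1) (D : ℝ) {t : ℝ}
    (ht : 0 < t) :
    HasDerivAt (fiberMap A B C p q θ α D) (t ^ (q - 1) * (psi A B C p q θ α t - q * D)) t := by
  have hpow : ∀ r : ℝ, HasDerivAt (fun t => t ^ r) (r * t ^ (r - 1)) t := fun r =>
    hasDerivAt_rpow_const (Or.inl ht.ne')
  have hd := ((((hpow p).div_const p).mul_const A).add
    (((hpow (p * θ)).div_const (p * θ)).mul_const B) |>.sub
    (((hpow (1 - α)).div_const (1 - α)).mul_const C)).sub ((hpow q).mul_const D)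
  refine hd.congr_deriv ?_
  have e : ∀ r, t ^ (q - 1) * t ^ (r - q) = t ^ (r - 1) := fun r => by
    rw [← rpow_add ht]; ring_nf
  rw [mul_div_cancel_left₀ _ hp, mul_div_cancel_left₀ _ hpθ,
    mul_div_cancel_left₀ _ (sub_ne_zero.2 hα.symm), psi]
  linear_combination -A * e p - B * e (p * θ) + C * e (1 - α)

end NehariFibering

end

open NehariFibering in
/-- If D ≤ 0 then ψ(t) = q·D has a unique solution t₃ > 0; moreover t₃ < t_max (the maximizer
of ψ), ψ'(t₃) > 0, and the fiber map φ attains its global infimum over (0,∞) at t₃. -/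
theorem stmt_8 (p q θ α A B C D tmax : ℝ)
    (hα0 : 0 < α) (hα1 : α < 1) (hp : 1 < p) (hθ : 1 < θ) (hpq : p * θ < q)
    (hA : 0 < A) (hB : 0 < B) (hC : 0 < C)
    (ψ φ : ℝ → ℝ)
    (hψ : ∀ t, 0 < t →
      ψ t = A * t ^ (p - q) + B * t ^ (p * θ - q) - C * t ^ (1 - α - q))
    (hφ : ∀ t, 0 < t →
      φ t = t ^ p / p * A + t ^ (p * θ) / (p * θ) * B
        - t ^ (1 - α) / (1 - α) * C - t ^ q * D)
    (htmax : 0 < tmax) (hmax : ∀ t, 0 < t → ψ t ≤ ψ tmax)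
    (hD : D ≤ 0) :
    ∃ t₃ > 0, ψ t₃ = q * D ∧ (∀ t, 0 < t → ψ t = q * D → t = t₃) ∧
      t₃ < tmax ∧ 0 < deriv ψ t₃ ∧ (∀ t, 0 < t → φ t₃ ≤ φ t) := by
  have hpθ : p < p * θ := by nlinarith
  have hψeq : EqOn ψ (psi A B C p q θ α) (Ioi 0) := hψ
  have hmax' : IsMaxOn (psi A B C p q θ α) (Ioi 0) tmax := isMaxOn_iff.2 fun t ht => by
    rw [← hψeq ht, ← hψeq htmax]
    exact hmax t ht
  obtain ⟨hψ'pos, hψ'neg⟩ := deriv_psi_pos_and_neg_of_isMaxOn hA hB (hpθ.trans hpq) hpq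
    (by linarith) (by linarith) htmax hmax'
  obtain ⟨t₃, ⟨ht₃, ht₃max⟩, hψt₃, hbelow, habove⟩ :=
    exists_crossing_of_deriv_pos_of_deriv_neg (y := q * D) htmax continuousOn_psi hψ'pos hψ'neg
      (tendsto_psi_nhdsGT_zero hC (by linarith) (by linarith) (by linarith))
      (tendsto_psi_atTop (hpθ.trans hpq) hpq (by linarith))
      (mul_nonpos_of_nonneg_of_nonpos (by linarith) hD)
  have hφ' : ∀ {t}, 0 < t → HasDerivAt (fiberMap A B C p q θ α D)
      (t ^ (q - 1) * (psi A B C p q θ α t - q * D)) t :=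
    hasDerivAt_fiberMap (by linarith) (by nlinarith) hα1.ne D
  have hmin : IsMinOn (fiberMap A B C p q θ α D) (Ioi 0) t₃ :=
    isMinOn_Ioi_of_deriv_neg_of_deriv_pos ht₃
      (continuousOn_of_forall_continuousAt fun _ ht => (hφ' ht).continuousAt)
      (fun t ht => (hφ' ht.1).deriv ▸
        mul_neg_of_pos_of_neg (rpow_pos_of_pos ht.1 _) (sub_neg.2 (hbelow t ht)))
      (fun t ht => (hφ' (ht₃.trans ht)).deriv ▸
        mul_pos (rpow_pos_of_pos (ht₃.trans ht) _) (sub_pos.2 (habove t ht)))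
  refine ⟨t₃, ht₃, (hψeq ht₃).trans hψt₃, fun t ht hψt => ?_, ht₃max, ?_, fun t ht => ?_⟩
  · rcases lt_trichotomy t t₃ with h | h | h
    · exact absurd ((hψeq ht).symm.trans hψt) (hbelow t ⟨ht, h⟩).ne
    · exact h
    · exact absurd ((hψeq ht).symm.trans hψt) (habove t h).ne'
  · rw [(hψeq.eventuallyEq_of_mem (Ioi_mem_nhds ht₃)).deriv_eq]
    exact hψ'pos t₃ ⟨ht₃, ht₃max⟩
  · rw [hφ t₃ ht₃, hφ t ht]
    exact hmin ht
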